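/- Let H and h be nonnegative continuous functions on (0,1], let 0 < ε < 1/4, θ ∈ (0,1/4), and let ω : [0,1] → [0,∞) be increasing with ω(0) = 0 and ∫_0^1 ω(t)/t dt < ∞. Suppose there is C_0 such that: (i) max_{r ≤ t ≤ 2r} H(t) ≤ C_0 H(2r) and max_{r ≤ t,s ≤ 2r} |h(t) − h(s)| ≤ C_0 H(2r) for all r ∈ [ε, 1/2]; (ii) H(θr) ≤ (1/2) H(r) + C_0 ω(ε/r) (H(2r) + h(2r)) for all r ∈ [θ^{−1}ε, 1/2]. Then max_{ε ≤ r ≤ 1} (H(r) + h(r)) ≤ C (H(1) + h(1)), with C depending only on C_0, θ, ω. -/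

import Mathlib

/-!
Along the grid `r_j = θ ^ j / 2`, hypothesis (ii) reads
`H (r_{j+1}) ≤ H (r_j) / 2 + C₀ ω_j (H + h)(θ ^ j)` with `ω_j = ω (2ε / θ ^ j)`, while the
doubling hypotheses (i), chained over boundedly many dyadic steps, bound `H` and `h` at any point
by their values at a grid point at most `θ⁻²` times larger; the oscillation of `h` is summed
along the grid. With `V_m = H 1 + h 1 + ∑_{j<m} H (r_j)` this gives
`V_{m+1} + 2 H (r_{m+1}) ≤ (1 + C ω_m) (V_m + 2 H (r_m))`, hence a bound by `exp (C ∑ ω_j)`,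
and monotonicity of `ω` gives `∑_j ω (2ε / θ ^ j) ≤ ∑_k ω (θ ^ k) ≤ (1 - θ)⁻¹ ∫₀¹ ω t / t`.
-/

open MeasureTheory Set Finset Real

theorem mul_div_le_setIntegral_div_of_monotoneOn {ω : ℝ → ℝ}
    (hω : ∀ t ∈ Icc (0 : ℝ) 1, 0 ≤ ω t) (hmono : MonotoneOn ω (Icc 0 1))
    {a b : ℝ} (ha : 0 < a) (hab : a ≤ b) (hb : b ≤ 1)
    (hint : IntegrableOn (fun t => ω t / t) (Ioc a b)) :
    (b - a) * (ω a / b) ≤ ∫ t in Ioc a b, ω t / t := by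
  have hconst : ∫ _ in Ioc a b, ω a / b = (b - a) * (ω a / b) := by
    rw [setIntegral_const, measureReal_def, Real.volume_Ioc,
      ENNReal.toReal_ofReal (sub_nonneg.2 hab), smul_eq_mul]
  rw [← hconst]
  refine setIntegral_mono_on (integrableOn_const measure_Ioc_lt_top.ne) hint measurableSet_Ioc
    fun t ⟨hat, htb⟩ => ?_
  have ht : t ∈ Icc (0 : ℝ) 1 := ⟨(ha.trans hat).le, htb.trans hb⟩
  exact div_le_div₀ (hω t ht) (hmono ⟨ha.le, hab.trans hb⟩ ht hat.le) (ha.trans hat) htb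

theorem one_sub_mul_sum_le_setIntegral_div {ω : ℝ → ℝ}
    (hω : ∀ t ∈ Icc (0 : ℝ) 1, 0 ≤ ω t) (hmono : MonotoneOn ω (Icc 0 1))
    (hDini : IntegrableOn (fun t => ω t / t) (Ioc 0 1))
    {θ : ℝ} (hθ₀ : 0 < θ) (hθ₁ : θ < 1) (m : ℕ) :
    (1 - θ) * ∑ j ∈ range m, ω (θ ^ (j + 1)) ≤ ∫ t in Ioc 0 1, ω t / t := by
  have hpow : ∀ j : ℕ, θ ^ (j + 1) ≤ θ ^ j := fun j =>
    pow_le_pow_of_le_one hθ₀.le hθ₁.le j.le_succ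
  have hpow1 : ∀ j : ℕ, θ ^ j ≤ 1 := fun j => pow_le_one₀ hθ₀.le hθ₁.le
  have hsub : ∀ j : ℕ, Ioc (θ ^ j) 1 ⊆ Ioc 0 1 := fun j =>
    Ioc_subset_Ioc_left (pow_pos hθ₀ j).le
  suffices key : ∀ m : ℕ,
      (1 - θ) * ∑ j ∈ range m, ω (θ ^ (j + 1)) ≤ ∫ t in Ioc (θ ^ m) 1, ω t / t from
    (key m).trans <| setIntegral_mono_set hDini
      ((ae_restrict_iff' measurableSet_Ioc).2 <| ae_of_all _ fun t ht =>
        div_nonneg (hω t (Ioc_subset_Icc_self ht)) ht.1.le)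
      (hsub m).eventuallyLE
  intro m
  induction m with
  | zero => simp
  | succ m ih =>
    have hint : IntegrableOn (fun t => ω t / t) (Ioc (θ ^ (m + 1)) (θ ^ m)) :=
      hDini.mono_set ((Ioc_subset_Ioc_right (hpow1 m)).trans (hsub _))
    have hpiece := mul_div_le_setIntegral_div_of_monotoneOn hω hmono (pow_pos hθ₀ (m + 1))
      (hpow m) (hpow1 m) hint
    have hsplit : ∫ t in Ioc (θ ^ (m + 1)) 1, ω t / t
        = (∫ t in Ioc (θ ^ (m + 1)) (θ ^ m), ω t / t) + ∫ t in Ioc (θ ^ m) 1, ω t / t := by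
      rw [← Ioc_union_Ioc_eq_Ioc (hpow m) (hpow1 m), setIntegral_union
        (Ioc_disjoint_Ioc_of_le le_rfl) measurableSet_Ioc hint (hDini.mono_set (hsub m))]
    have hθm : (θ ^ m - θ ^ (m + 1)) * (ω (θ ^ (m + 1)) / θ ^ m)
        = (1 - θ) * ω (θ ^ (m + 1)) := by
      field_simp [(pow_pos hθ₀ m).ne']
      ring
    rw [sum_range_succ, mul_add, hsplit]
    linarith

theorem le_mul_exp_sum_of_le_one_add_mul {a c : ℕ → ℝ} {m : ℕ} (ha : ∀ k < m, 0 ≤ a k)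
    (hstep : ∀ k < m, a (k + 1) ≤ (1 + c k) * a k) :
    a m ≤ a 0 * exp (∑ k ∈ range m, c k) := by
  induction m with
  | zero => simp
  | succ m ih =>
    have hexp : (1 + c m) * a m ≤ exp (c m) * a m :=
      mul_le_mul_of_nonneg_right (by linarith [add_one_le_exp (c m)]) (ha m m.lt_succ_self)
    calc a (m + 1) ≤ exp (c m) * a m := (hstep m m.lt_succ_self).trans hexp
      _ ≤ exp (c m) * (a 0 * exp (∑ k ∈ range m, c k)) :=
        mul_le_mul_of_nonneg_left (ih (fun k hk => ha k (by omega))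
          (fun k hk => hstep k (by omega))) (exp_pos _).le
      _ = a 0 * exp (∑ k ∈ range (m + 1), c k) := by
        rw [sum_range_succ, exp_add]; ring

structure DyadicControl (ε K : ℝ) (H h : ℝ → ℝ) : Prop where
  nonneg : ∀ t ∈ Ioc (0 : ℝ) 1, 0 ≤ H t
  le_mul : ∀ r ∈ Icc ε (1/2), ∀ t ∈ Icc r (2*r), H t ≤ K * H (2*r)
  abs_sub_le_mul : ∀ r ∈ Icc ε (1/2), ∀ t ∈ Icc r (2*r), ∀ s ∈ Icc r (2*r),
    |h t - h s| ≤ K * H (2*r)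

def ScaleComparable (ε ρ L : ℝ) (H h : ℝ → ℝ) : Prop :=
  ∀ ⦃t s : ℝ⦄, ε ≤ t → t ≤ s → ρ * s ≤ t → 2 * ε ≤ s → s ≤ 1 →
    H t ≤ L * H s ∧ h t ≤ h s + L * H s

namespace DyadicControl

variable {ε K K' : ℝ} {H h : ℝ → ℝ}

theorem mono (hD : DyadicControl ε K H h) (hε : 0 < ε) (hK : K ≤ K') :
    DyadicControl ε K' H h := by
  have hmul : ∀ r ∈ Icc ε (1/2), K * H (2*r) ≤ K' * H (2*r) := fun r hr =>
    mul_le_mul_of_nonneg_right hK (hD.nonneg _ ⟨by linarith [hr.1], by linarith [hr.2]⟩)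
  exact ⟨hD.nonneg, fun r hr t ht => (hD.le_mul r hr t ht).trans (hmul r hr),
    fun r hr t ht s hs => (hD.abs_sub_le_mul r hr t ht s hs).trans (hmul r hr)⟩

theorem chain (hD : DyadicControl ε K H h) (hε : 0 < ε) (hK : 1 ≤ K) (n : ℕ) {t s : ℝ}
    (hεt : ε ≤ t) (hts : t ≤ s) (hst : s ≤ 2 ^ n * t) (hεs : 2 * ε ≤ s) (hs : s ≤ 1) :
    H t ≤ K ^ n * H s ∧ |h t - h s| ≤ n * K ^ n * H s := by
  induction n generalizing t with
  | zero =>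
    obtain rfl : t = s := le_antisymm hts (by simpa using hst)
    simp
  | succ n ih =>
    have hHs : 0 ≤ H s := hD.nonneg s ⟨by linarith, hs⟩
    by_cases h2t : s ≤ 2 * t
    · have hr : s / 2 ∈ Icc ε (1/2) := ⟨by linarith, by linarith⟩
      have ht : t ∈ Icc (s / 2) (2 * (s / 2)) := ⟨by linarith, by linarith⟩
      have hs' : s ∈ Icc (s / 2) (2 * (s / 2)) := ⟨by linarith, by linarith⟩
      have hHt := hD.le_mul _ hr t ht
      have hht := hD.abs_sub_le_mul _ hr t ht s hs'
      rw [mul_div_cancel₀ s two_ne_zero] at hHt hht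
      have hK1 : K * H s ≤ K ^ (n + 1) * H s :=
        mul_le_mul_of_nonneg_right (le_self_pow₀ hK n.succ_ne_zero) hHs
      have hKn : K ^ (n + 1) * H s ≤ (n + 1 : ℕ) * K ^ (n + 1) * H s := by
        rw [mul_assoc]
        exact le_mul_of_one_le_left (by positivity) (by norm_num)
      exact ⟨hHt.trans hK1, hht.trans (hK1.trans hKn)⟩
    · replace h2t := (not_le.1 h2t).le
      have hr : t ∈ Icc ε (1/2) := ⟨hεt, by linarith⟩
      have hHt := hD.le_mul t hr t ⟨le_rfl, by linarith⟩
      have hht := hD.abs_sub_le_mul t hr t ⟨le_rfl, by linarith⟩ (2 * t)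
        ⟨by linarith, le_rfl⟩
      obtain ⟨ih₁, ih₂⟩ := ih (t := 2 * t) (by linarith) h2t
        (by rw [pow_succ] at hst; linarith)
      have hK0 : 0 ≤ K := by linarith
      have hHt2 : K * H (2 * t) ≤ K ^ (n + 1) * H s := by
        rw [pow_succ, mul_comm (K ^ n) K, mul_assoc]
        exact mul_le_mul_of_nonneg_left ih₁ hK0
      refine ⟨hHt.trans hHt2, ?_⟩
      calc |h t - h s| ≤ |h t - h (2 * t)| + |h (2 * t) - h s| := abs_sub_le _ _ _
        _ ≤ K ^ (n + 1) * H s + n * K ^ (n + 1) * H s := by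
          gcongr
          · exact hht.trans hHt2
          · exact ih₂.trans (by gcongr; exact n.le_succ)
        _ = (n + 1 : ℕ) * K ^ (n + 1) * H s := by push_cast; ring

theorem scaleComparable (hD : DyadicControl ε K H h) (hε : 0 < ε) (hK : 1 ≤ K) {ρ : ℝ}
    (hρ : 0 < ρ) {n : ℕ} (hn : ρ⁻¹ ≤ 2 ^ n) : ScaleComparable ε ρ ((n + 1) * K ^ n) H h := by
  intro t s hεt hts hst hεs hs
  have hst' : s ≤ 2 ^ n * t := by
    calc s = ρ⁻¹ * (ρ * s) := by field_simp
      _ ≤ 2 ^ n * t := mul_le_mul hn hst (by nlinarith) (by positivity)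
  obtain ⟨h₁, h₂⟩ := hD.chain hε hK n hεt hts hst' hεs hs
  have hHs : 0 ≤ H s := hD.nonneg s ⟨by linarith, hs⟩
  have hK0 : 0 ≤ K ^ n * H s := mul_nonneg (pow_nonneg (by linarith) n) hHs
  have hn1 : (n : ℝ) ≤ n + 1 := by linarith
  refine ⟨h₁.trans ?_, ?_⟩
  · rw [mul_assoc]
    exact le_mul_of_one_le_left hK0 (le_add_of_nonneg_left n.cast_nonneg)
  · calc h t ≤ h s + |h t - h s| := by linarith [le_abs_self (h t - h s)]
      _ ≤ h s + (n + 1) * K ^ n * H s := by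
        rw [mul_assoc] at h₂ ⊢
        linarith [mul_le_mul_of_nonneg_right hn1 hK0]

end DyadicControl

structure IterationHyp (ε θ c L : ℝ) (ω H h : ℝ → ℝ) : Prop where
  ε_pos : 0 < ε
  ε_le_half : ε ≤ 1/2
  θ_pos : 0 < θ
  θ_le_half : θ ≤ 1/2
  one_le_L : 1 ≤ L
  c_nonneg : 0 ≤ c
  H_nonneg : ∀ t ∈ Ioc (0 : ℝ) 1, 0 ≤ H t
  h_nonneg : ∀ t ∈ Ioc (0 : ℝ) 1, 0 ≤ h t
  ω_nonneg : ∀ t ∈ Icc (0 : ℝ) 1, 0 ≤ ω t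
  ω_mono : MonotoneOn ω (Icc 0 1)
  comparable : ScaleComparable ε (θ ^ 2) L H h
  decay : ∀ r ∈ Icc (θ⁻¹ * ε) (1/2),
    H (θ * r) ≤ 1/2 * H r + c * ω (ε / r) * (H (2 * r) + h (2 * r))

/-- Grid points are `θ ^ j / 2` so that the doubled points `θ ^ j`, where (ii) evaluates
`H + h`, stay in `(0, 1]`. -/
noncomputable def gridMass (θ : ℝ) (H h : ℝ → ℝ) (m : ℕ) : ℝ :=
  H 1 + h 1 + ∑ j ∈ range m, H (θ ^ j / 2)

theorem gridMass_zero (θ : ℝ) (H h : ℝ → ℝ) : gridMass θ H h 0 = H 1 + h 1 := by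
  simp [gridMass]

theorem gridMass_succ (θ : ℝ) (H h : ℝ → ℝ) (m : ℕ) :
    gridMass θ H h (m + 1) = gridMass θ H h m + H (θ ^ m / 2) := by
  simp only [gridMass, sum_range_succ]; ring

namespace IterationHyp

variable {ε θ c L W : ℝ} {ω H h : ℝ → ℝ}

theorem pow_le_one (hI : IterationHyp ε θ c L ω H h) (m : ℕ) : θ ^ m ≤ 1 :=
  pow_le_one₀ hI.θ_pos.le (by linarith [hI.θ_le_half])

theorem pow_succ_le_half (hI : IterationHyp ε θ c L ω H h) (m : ℕ) :
    θ ^ (m + 1) ≤ θ ^ m / 2 := by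
  rw [pow_succ]; nlinarith [pow_pos hI.θ_pos m, hI.θ_le_half]

theorem sq_mul_grid_le (hI : IterationHyp ε θ c L ω H h) (m : ℕ) :
    θ ^ 2 * (θ ^ m / 2) ≤ θ ^ (m + 1) / 2 := by
  have hθm : 0 ≤ θ ^ (m + 1) / 2 := by positivity [hI.θ_pos]
  calc θ ^ 2 * (θ ^ m / 2) = θ * (θ ^ (m + 1) / 2) := by ring
    _ ≤ θ ^ (m + 1) / 2 := mul_le_of_le_one_left hθm (by linarith [hI.θ_le_half])

theorem H_grid_nonneg (hI : IterationHyp ε θ c L ω H h) (m : ℕ) : 0 ≤ H (θ ^ m / 2) :=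
  hI.H_nonneg _ ⟨by positivity [hI.θ_pos], by linarith [hI.pow_le_one m]⟩

theorem gridMass_nonneg (hI : IterationHyp ε θ c L ω H h) (m : ℕ) : 0 ≤ gridMass θ H h m :=
  add_nonneg (add_nonneg (hI.H_nonneg 1 ⟨one_pos, le_rfl⟩) (hI.h_nonneg 1 ⟨one_pos, le_rfl⟩))
    (sum_nonneg fun j _ => hI.H_grid_nonneg j)

theorem comparable_half_one (hI : IterationHyp ε θ c L ω H h) :
    H (1/2) ≤ L * H 1 ∧ h (1/2) ≤ h 1 + L * H 1 :=
  hI.comparable (by linarith [hI.ε_le_half]) (by norm_num)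
    (by nlinarith [hI.θ_pos, hI.θ_le_half]) (by linarith [hI.ε_le_half]) le_rfl

theorem h_grid_le (hI : IterationHyp ε θ c L ω H h) {m : ℕ} (hm : 2 * ε ≤ θ ^ m) :
    h (θ ^ m / 2) ≤ L * gridMass θ H h m := by
  induction m with
  | zero =>
    have hh1 := hI.h_nonneg 1 ⟨one_pos, le_rfl⟩
    rw [pow_zero, gridMass_zero]
    nlinarith [hI.comparable_half_one.2, hI.one_le_L]
  | succ m ih =>
    have hθm := hI.pow_succ_le_half m
    obtain ⟨-, hcmp⟩ := hI.comparable (t := θ ^ (m + 1) / 2) (s := θ ^ m / 2) (by linarith)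
      (by linarith [pow_pos hI.θ_pos m]) (hI.sq_mul_grid_le m)
      (by linarith) (by linarith [hI.pow_le_one m])
    rw [gridMass_succ]
    nlinarith [ih (hm.trans (by linarith [pow_pos hI.θ_pos (m + 1)]))]

theorem H_add_h_pow_le (hI : IterationHyp ε θ c L ω H h) {m : ℕ} (hm : 2 * ε ≤ θ ^ (m + 1)) :
    H (θ ^ m) + h (θ ^ m) ≤ 2 * L * gridMass θ H h m := by
  cases m with
  | zero =>
    have hA := gridMass_zero θ H h ▸ hI.gridMass_nonneg 0
    rw [pow_zero, gridMass_zero]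
    nlinarith [hI.one_le_L]
  | succ k =>
    have hθk := hI.pow_succ_le_half k
    have hθk₁ := hI.pow_succ_le_half (k + 1)
    obtain ⟨hH, hh⟩ := hI.comparable (t := θ ^ (k + 1)) (s := θ ^ k / 2)
      (by linarith [pow_pos hI.θ_pos (k + 2)]) hθk
      (by linarith [hI.sq_mul_grid_le k, pow_pos hI.θ_pos (k + 1)])
      (by linarith [pow_pos hI.θ_pos (k + 2)])
      (by linarith [hI.pow_le_one k])
    have hgrid := hI.h_grid_le (m := k) (by linarith [pow_pos hI.θ_pos (k + 2)])
    have hV := hI.gridMass_nonneg k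
    have hHk := hI.H_grid_nonneg k
    rw [gridMass_succ]
    nlinarith [hI.one_le_L]

/-- The weight `2` on `H (θ ^ m / 2)` absorbs the factor `1/2` in (ii). -/
theorem grid_step (hI : IterationHyp ε θ c L ω H h) {m : ℕ} (hm : 2 * ε ≤ θ ^ (m + 1)) :
    gridMass θ H h (m + 1) + 2 * H (θ ^ (m + 1) / 2)
      ≤ (1 + 4 * c * L * ω (ε / (θ ^ m / 2))) * (gridMass θ H h m + 2 * H (θ ^ m / 2)) := by
  have hr : θ ^ m / 2 ∈ Icc (θ⁻¹ * ε) (1/2) := by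
    refine ⟨?_, by linarith [hI.pow_le_one m]⟩
    rw [inv_mul_le_iff₀ hI.θ_pos]
    rw [pow_succ'] at hm
    linarith
  have hdecay := hI.decay _ hr
  rw [show θ * (θ ^ m / 2) = θ ^ (m + 1) / 2 by ring, show 2 * (θ ^ m / 2) = θ ^ m by ring]
    at hdecay
  have hμ : 0 ≤ c * ω (ε / (θ ^ m / 2)) := mul_nonneg hI.c_nonneg <| hI.ω_nonneg _
    ⟨by positivity [hI.ε_pos, hI.θ_pos], by
      rw [div_le_one (by positivity [hI.θ_pos])]
      linarith [hI.pow_succ_le_half m, pow_pos hI.θ_pos m]⟩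
  have hB := mul_le_mul_of_nonneg_left (hI.H_add_h_pow_le hm) hμ
  have hHm := mul_nonneg (mul_nonneg hμ (by linarith [hI.one_le_L] : (0 : ℝ) ≤ L))
    (hI.H_grid_nonneg m)
  rw [gridMass_succ]
  nlinarith

theorem sum_ω_grid_le (hI : IterationHyp ε θ c L ω H h) {m : ℕ} (hm : 2 * ε ≤ θ ^ m) :
    ∑ k ∈ range m, ω (ε / (θ ^ k / 2)) ≤ ∑ j ∈ range m, ω (θ ^ (j + 1)) := by
  rw [← sum_range_reflect (fun j => ω (θ ^ (j + 1))) m]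
  refine sum_le_sum fun k hk => ?_
  have hpow : θ ^ (m - 1 - k + 1) * (θ ^ k / 2) = θ ^ m / 2 := by
    have := mem_range.1 hk
    rw [mul_div_assoc', ← pow_add]
    congr 2
    omega
  have hle : ε / (θ ^ k / 2) ≤ θ ^ (m - 1 - k + 1) := by
    rw [div_le_iff₀ (by positivity [hI.θ_pos]), hpow]; linarith
  exact hI.ω_mono ⟨by positivity [hI.ε_pos, hI.θ_pos], hle.trans (hI.pow_le_one _)⟩
    ⟨(pow_pos hI.θ_pos _).le, hI.pow_le_one _⟩ hle

theorem grid_le (hI : IterationHyp ε θ c L ω H h)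
    (hW : ∀ m, ∑ j ∈ range m, ω (θ ^ (j + 1)) ≤ W) {m : ℕ} (hm : 2 * ε ≤ θ ^ m) :
    gridMass θ H h m + 2 * H (θ ^ m / 2)
      ≤ (1 + 2 * L) * exp (4 * c * L * W) * (H 1 + h 1) := by
  have hgron := le_mul_exp_sum_of_le_one_add_mul
    (a := fun m => gridMass θ H h m + 2 * H (θ ^ m / 2))
    (c := fun k => 4 * c * L * ω (ε / (θ ^ k / 2))) (m := m)
    (fun k _ => add_nonneg (hI.gridMass_nonneg k) (mul_nonneg two_pos.le (hI.H_grid_nonneg k)))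
    (fun k hk => hI.grid_step (hm.trans (pow_le_pow_of_le_one hI.θ_pos.le
      (by linarith [hI.θ_le_half]) hk)))
  have ha₀ : gridMass θ H h 0 + 2 * H (θ ^ 0 / 2) ≤ (1 + 2 * L) * (H 1 + h 1) := by
    rw [pow_zero, gridMass_zero]
    have hLh := mul_nonneg (by linarith [hI.one_le_L] : (0 : ℝ) ≤ L)
      (hI.h_nonneg 1 ⟨one_pos, le_rfl⟩)
    linarith [hI.comparable_half_one.1]
  have hsum : ∑ k ∈ range m, 4 * c * L * ω (ε / (θ ^ k / 2)) ≤ 4 * c * L * W := by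
    rw [← mul_sum]
    exact mul_le_mul_of_nonneg_left ((hI.sum_ω_grid_le hm).trans (hW m))
      (by have := hI.c_nonneg; have := hI.one_le_L; positivity)
  calc _ ≤ _ := hgron
    _ ≤ (1 + 2 * L) * (H 1 + h 1) * exp (4 * c * L * W) :=
      mul_le_mul ha₀ (exp_le_exp.2 hsum) (exp_pos _).le
        (mul_nonneg (by linarith [hI.one_le_L]) (gridMass_zero θ H h ▸ hI.gridMass_nonneg 0))
    _ = _ := by ring

theorem add_grid_le (hI : IterationHyp ε θ c L ω H h)
    (hW : ∀ m, ∑ j ∈ range m, ω (θ ^ (j + 1)) ≤ W) {m : ℕ} (hm : 2 * ε ≤ θ ^ m) :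
    H (θ ^ m / 2) + h (θ ^ m / 2)
      ≤ (1 + L) * (1 + 2 * L) * exp (4 * c * L * W) * (H 1 + h 1) := by
  have hV := hI.gridMass_nonneg m
  have hH := hI.H_grid_nonneg m
  have hh := hI.h_grid_le hm
  have hL := hI.one_le_L
  nlinarith [hI.grid_le hW hm]

theorem exists_grid_point (hI : IterationHyp ε θ c L ω H h) {r : ℝ} (hr : r ∈ Icc ε 1)
    (hrθ : r ≤ θ / 2) :
    ∃ m : ℕ, r ≤ θ ^ m / 2 ∧ θ ^ 2 * (θ ^ m / 2) ≤ r ∧ 2 * ε ≤ θ ^ m / 2 := by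
  have hθ := hI.θ_pos
  obtain ⟨m, hlt, hle⟩ := exists_nat_pow_near_of_lt_one (x := 2 * r / θ)
    (div_pos (by linarith [hI.ε_pos, hr.1]) hθ) (by rw [div_le_one hθ]; linarith) hθ
    (by linarith [hI.θ_le_half])
  rw [lt_div_iff₀ hθ, ← pow_succ] at hlt
  rw [div_le_iff₀ hθ, ← pow_succ] at hle
  have hsucc := hI.pow_succ_le_half m
  refine ⟨m, by linarith [pow_pos hθ m], ?_, by linarith [hr.1]⟩
  rw [show θ ^ 2 * (θ ^ m / 2) = θ ^ (m + 1 + 1) / 2 by ring]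
  linarith

theorem add_le (hI : IterationHyp ε θ c L ω H h)
    (hW : ∀ m, ∑ j ∈ range m, ω (θ ^ (j + 1)) ≤ W) {r : ℝ} (hr : r ∈ Icc ε 1) :
    H r + h r ≤ (1 + L) * (1 + 2 * L) ^ 2 * exp (4 * c * L * W) * (H 1 + h 1) := by
  have hL := hI.one_le_L
  have hA : 0 ≤ H 1 + h 1 := gridMass_zero θ H h ▸ hI.gridMass_nonneg 0
  have hM : 1 ≤ (1 + L) * (1 + 2 * L) * exp (4 * c * L * W) := by
    have hW0 : 0 ≤ W := by simpa using hW 0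
    have := hI.c_nonneg
    exact one_le_mul_of_one_le_of_one_le
      (one_le_mul_of_one_le_of_one_le (by linarith) (by linarith)) (one_le_exp (by positivity))
  obtain ⟨s, hrs, hsr, hεs, hs1, hs⟩ : ∃ s, r ≤ s ∧ θ ^ 2 * s ≤ r ∧ 2 * ε ≤ s ∧ s ≤ 1 ∧
      H s + h s ≤ (1 + L) * (1 + 2 * L) * exp (4 * c * L * W) * (H 1 + h 1) := by
    by_cases hrθ : r ≤ θ / 2
    · obtain ⟨m, hrm, hmr, hεm⟩ := hI.exists_grid_point hr hrθ
      exact ⟨θ ^ m / 2, hrm, hmr, hεm, by linarith [hI.pow_le_one m],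
        hI.add_grid_le hW (by linarith [pow_pos hI.θ_pos m])⟩
    · exact ⟨1, hr.2, by nlinarith [hI.θ_pos, hI.θ_le_half], by linarith [hI.ε_le_half], le_rfl,
        le_mul_of_one_le_left hA hM⟩
  obtain ⟨hHr, hhr⟩ := hI.comparable hr.1 hrs hsr hεs hs1
  have hHs := hI.H_nonneg s ⟨by linarith [hI.ε_pos], hs1⟩
  have hhs := hI.h_nonneg s ⟨by linarith [hI.ε_pos], hs1⟩
  calc H r + h r ≤ (1 + 2 * L) * (H s + h s) := by
        linarith [mul_nonneg (by linarith : (0 : ℝ) ≤ L) hhs]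
    _ ≤ (1 + 2 * L) * ((1 + L) * (1 + 2 * L) * exp (4 * c * L * W) * (H 1 + h 1)) :=
        mul_le_mul_of_nonneg_left hs (by linarith)
    _ = _ := by ring

end IterationHyp

theorem stmt_12_general (C₀ θ : ℝ) (hC₀ : 0 < C₀) (hθ : θ ∈ Set.Ioo (0 : ℝ) (1/4))
    (ω : ℝ → ℝ) (hωnn : ∀ t ∈ Set.Icc (0 : ℝ) 1, 0 ≤ ω t)
    (hωmono : MonotoneOn ω (Set.Icc (0 : ℝ) 1))
    (hDini : IntegrableOn (fun t => ω t / t) (Set.Ioc (0 : ℝ) 1)) :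
    ∃ C > 0, ∀ (ε : ℝ), 0 < ε → ε < 1/4 → ∀ (H h : ℝ → ℝ),
      ContinuousOn H (Set.Ioc 0 1) → ContinuousOn h (Set.Ioc 0 1) →
      (∀ t ∈ Set.Ioc (0 : ℝ) 1, 0 ≤ H t) → (∀ t ∈ Set.Ioc (0 : ℝ) 1, 0 ≤ h t) →
      (∀ r ∈ Set.Icc ε (1/2), ∀ t ∈ Set.Icc r (2*r), H t ≤ C₀ * H (2*r)) →
      (∀ r ∈ Set.Icc ε (1/2), ∀ t ∈ Set.Icc r (2*r), ∀ s ∈ Set.Icc r (2*r),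
        |h t - h s| ≤ C₀ * H (2*r)) →
      (∀ r ∈ Set.Icc (θ⁻¹ * ε) (1/2),
        H (θ*r) ≤ (1/2) * H r + C₀ * ω (ε/r) * (H (2*r) + h (2*r))) →
      ∀ r ∈ Set.Icc ε 1, H r + h r ≤ C * (H 1 + h 1) := by
  obtain ⟨hθ₀, hθ₁⟩ := hθ
  obtain ⟨N, hN⟩ := pow_unbounded_of_one_lt (θ ^ 2)⁻¹ one_lt_two
  set K := max C₀ 1
  set L : ℝ := (N + 1) * K ^ N
  set W := (∫ t in Ioc 0 1, ω t / t) / (1 - θ)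
  have hW : ∀ m, ∑ j ∈ range m, ω (θ ^ (j + 1)) ≤ W := fun m =>
    (le_div_iff₀' (by linarith)).2
      (one_sub_mul_sum_le_setIntegral_div hωnn hωmono hDini hθ₀ (by linarith) m)
  refine ⟨(1 + L) * (1 + 2 * L) ^ 2 * exp (4 * C₀ * L * W), by positivity, ?_⟩
  intro ε hε hε₁ H h _ _ hH hh hdoubling hosc hdecay r hr
  have hD := (DyadicControl.mk hH hdoubling hosc).mono hε (le_max_left C₀ 1)
  have hI : IterationHyp ε θ C₀ L ω H h :=
    { ε_pos := hε, ε_le_half := by linarith, θ_pos := hθ₀, θ_le_half := by linarith,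
      one_le_L := one_le_mul_of_one_le_of_one_le (by simp) (one_le_pow₀ (le_max_right C₀ 1)),
      c_nonneg := hC₀.le, H_nonneg := hH, h_nonneg := hh, ω_nonneg := hωnn, ω_mono := hωmono,
      comparable := hD.scaleComparable hε (le_max_right C₀ 1) (by positivity) hN.le,
      decay := hdecay }
  exact hI.add_le hW hr

/-- abstract iteration lemma with a Dini modulus `ω`. -/
theorem stmt_12 (C₀ θ : ℝ) (hC₀ : 0 < C₀) (hθ : θ ∈ Set.Ioo (0 : ℝ) (1/4))
    (ω : ℝ → ℝ) (hω0 : ω 0 = 0) (hωnn : ∀ t ∈ Set.Icc (0 : ℝ) 1, 0 ≤ ω t)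
    (hωmono : MonotoneOn ω (Set.Icc (0 : ℝ) 1))
    (hDini : IntegrableOn (fun t => ω t / t) (Set.Ioc (0 : ℝ) 1)) :
    ∃ C > 0, ∀ (ε : ℝ), 0 < ε → ε < 1/4 → ∀ (H h : ℝ → ℝ),
      ContinuousOn H (Set.Ioc 0 1) → ContinuousOn h (Set.Ioc 0 1) →
      (∀ t ∈ Set.Ioc (0 : ℝ) 1, 0 ≤ H t) → (∀ t ∈ Set.Ioc (0 : ℝ) 1, 0 ≤ h t) →
      (∀ r ∈ Set.Icc ε (1/2), ∀ t ∈ Set.Icc r (2*r), H t ≤ C₀ * H (2*r)) →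
      (∀ r ∈ Set.Icc ε (1/2), ∀ t ∈ Set.Icc r (2*r), ∀ s ∈ Set.Icc r (2*r),
        |h t - h s| ≤ C₀ * H (2*r)) →
      (∀ r ∈ Set.Icc (θ⁻¹ * ε) (1/2),
        H (θ*r) ≤ (1/2) * H r + C₀ * ω (ε/r) * (H (2*r) + h (2*r))) →
      ∀ r ∈ Set.Icc ε 1, H r + h r ≤ C * (H 1 + h 1) :=
  stmt_12_general C₀ θ hC₀ hθ ω hωnn hωmono hDini
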